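/- arXiv:2112.02681 — 2 statements merged into one kernel-verified Lean document; each statement's English description precedes it below -/
import Mathlib

section
/- The function g(σ) := (σ² − σ)/log σ, extended continuously by g(1) = 1, is strictly increasing on (0, ∞), satisfies lim_{σ→0⁺} g(σ) = 0 and lim_{σ→∞} g(σ) = ∞. -/
/-!
Since `(σ² − σ)/log σ = ∫₁² σᵗ dt` (also at `σ = 1`, where both sides equal `1`), `g` is an average
of the strictly increasing functions `σ ↦ σᵗ`, `1 ≤ t ≤ 2`. The same representation puts `g(σ)`
between `0` and `σ` for `σ ≤ 1` and above `σ` for `σ ≥ 1`, which gives both limits.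
-/

open Real Filter

/-- `g(σ) = (σ² − σ)/log σ`, extended by `g(1) = 1`. -/
noncomputable def gFun (σ : ℝ) : ℝ := if σ = 1 then 1 else (σ ^ 2 - σ) / Real.log σ

theorem integral_const_rpow {σ : ℝ} (hσ : 0 < σ) (hσ1 : σ ≠ 1) (a b : ℝ) :
    ∫ t in a..b, σ ^ t = (σ ^ b - σ ^ a) / log σ := by
  have hlog : log σ ≠ 0 := log_ne_zero_of_pos_of_ne_one hσ hσ1
  have hderiv : ∀ t : ℝ, HasDerivAt (fun t : ℝ => σ ^ t / log σ) (σ ^ t) t := fun t => by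
    simpa [hlog] using (hasStrictDerivAt_const_rpow hσ t).hasDerivAt.div_const (log σ)
  rw [intervalIntegral.integral_eq_sub_of_hasDerivAt (fun t _ => hderiv t)
    ((continuous_const_rpow hσ.ne').intervalIntegrable a b), sub_div]

theorem gFun_eq_integral {σ : ℝ} (hσ : 0 < σ) : gFun σ = ∫ t in (1 : ℝ)..2, σ ^ t := by
  rcases eq_or_ne σ 1 with rfl | hσ1
  · norm_num [gFun]
  · rw [gFun, if_neg hσ1, integral_const_rpow hσ hσ1, rpow_two, rpow_one]

theorem gFun_le_self {σ : ℝ} (hσ : 0 < σ) (hσ1 : σ ≤ 1) : gFun σ ≤ σ := by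
  have hbound : ∫ t in (1 : ℝ)..2, σ ^ t ≤ ∫ _ in (1 : ℝ)..2, σ :=
    intervalIntegral.integral_mono_on one_le_two
      ((continuous_const_rpow hσ.ne').intervalIntegrable 1 2) intervalIntegrable_const
      fun t ht => by simpa using rpow_le_rpow_of_exponent_ge hσ hσ1 ht.1
  norm_num [gFun_eq_integral hσ] at hbound ⊢
  exact hbound

theorem self_le_gFun {σ : ℝ} (hσ : 1 ≤ σ) : σ ≤ gFun σ := by
  have hσ0 : 0 < σ := one_pos.trans_le hσ
  have hbound : ∫ _ in (1 : ℝ)..2, σ ≤ ∫ t in (1 : ℝ)..2, σ ^ t :=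
    intervalIntegral.integral_mono_on one_le_two intervalIntegrable_const
      ((continuous_const_rpow hσ0.ne').intervalIntegrable 1 2)
      fun t ht => by simpa using rpow_le_rpow_of_exponent_le hσ ht.1
  norm_num [gFun_eq_integral hσ0] at hbound ⊢
  exact hbound

theorem gFun_pos {σ : ℝ} (hσ : 0 < σ) : 0 < gFun σ := by
  rw [gFun_eq_integral hσ]
  exact intervalIntegral.intervalIntegral_pos_of_pos
    ((continuous_const_rpow hσ.ne').intervalIntegrable 1 2) (fun t => rpow_pos_of_pos hσ t)
    one_lt_two

theorem strictMonoOn_gFun : StrictMonoOn gFun (Set.Ioi 0) := by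
  intro a ha b hb hab
  rw [gFun_eq_integral ha, gFun_eq_integral hb]
  refine intervalIntegral.integral_lt_integral_of_continuousOn_of_le_of_exists_lt one_lt_two
    (continuous_const_rpow ha.ne').continuousOn (continuous_const_rpow hb.ne').continuousOn
    (fun t ht => rpow_le_rpow ha.le hab.le (zero_le_one.trans ht.1.le)) ⟨1, ⟨le_rfl, one_le_two⟩, ?_⟩
  simpa using hab

theorem stmt_2 :
    StrictMonoOn gFun (Set.Ioi (0 : ℝ)) ∧
    Tendsto gFun (nhdsWithin 0 (Set.Ioi 0)) (nhds 0) ∧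
    Tendsto gFun atTop atTop := by
  refine ⟨strictMonoOn_gFun, ?_, ?_⟩
  · have hsqueeze : ∀ᶠ σ in nhdsWithin 0 (Set.Ioi 0), 0 ≤ gFun σ ∧ gFun σ ≤ σ := by
      filter_upwards [Ioo_mem_nhdsGT one_pos] with σ hσ
      exact ⟨(gFun_pos hσ.1).le, gFun_le_self hσ.1 hσ.2.le⟩
    exact tendsto_of_tendsto_of_tendsto_of_le_of_le' tendsto_const_nhds
      (tendsto_nhdsWithin_of_tendsto_nhds tendsto_id) (hsqueeze.mono fun _ h => h.1)
      (hsqueeze.mono fun _ h => h.2)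
  · exact tendsto_atTop_mono' _ ((eventually_ge_atTop 1).mono fun _ => self_le_gFun) tendsto_id
end

section
/- As n → ∞, for θ with 1/n ≤ |θ| ≤ π, one has n f_n(θ) = g(n|θ|) + r_n(θ) where g(σ) = (σ² − σ)/log σ and the remainder satisfies |r_n(θ)| ≤ C(n θ² + |θ|) for a constant C independent of n and θ. -/
open Real

/-- The symbol `f_n(θ) = θ² Σ_{j=0}^{n-1} (1/(n|θ|))^{j/n}`. -/
noncomputable def fSymb (n : ℕ) (θ : ℝ) : ℝ :=
  θ ^ 2 * ∑ j ∈ Finset.range n, (1 / ((n : ℝ) * |θ|)) ^ ((j : ℝ) / n)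

/-!
Write `σ = n|θ|` and `x = log σ / n`. The terms of `f_n(θ)` form a geometric progression with
ratio `σ^(-1/n) = e^(-x)`, so for `σ > 1`
`n f_n(θ) - g(σ) = (σ² - σ)/n · (1/(1 - e^(-x)) - 1/x)`.
The elementary bounds `x/(1 + x) ≤ 1 - e^(-x) ≤ x` put the last factor in `[0, 1]`, so the
remainder lies in `[0, (σ² - σ)/n] = [0, nθ² - |θ|]`.
-/

lemma one_sub_exp_neg_pos {x : ℝ} (hx : 0 < x) : 0 < 1 - exp (-x) :=
  sub_pos.mpr (exp_lt_one_iff.mpr (neg_lt_zero.mpr hx))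

lemma inv_le_inv_one_sub_exp_neg {x : ℝ} (hx : 0 < x) : x⁻¹ ≤ (1 - exp (-x))⁻¹ :=
  inv_anti₀ (one_sub_exp_neg_pos hx) (by linarith [add_one_le_exp (-x)])

lemma inv_one_sub_exp_neg_le {x : ℝ} (hx : 0 < x) : (1 - exp (-x))⁻¹ ≤ 1 + x⁻¹ := by
  have hexp : exp (-x) * (x + 1) ≤ 1 := by
    calc exp (-x) * (x + 1) ≤ exp (-x) * exp x := by gcongr; exact add_one_le_exp x
      _ = 1 := by rw [← exp_add, neg_add_cancel, exp_zero]
  have hlow : x / (x + 1) ≤ 1 - exp (-x) := by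
    rw [div_le_iff₀ (by linarith)]
    linarith
  calc (1 - exp (-x))⁻¹ ≤ (x / (x + 1))⁻¹ := inv_anti₀ (by positivity) hlow
    _ = 1 + x⁻¹ := by field_simp

lemma sum_rpow_div_mul_one_sub {a : ℝ} (ha : 0 ≤ a) {n : ℕ} (hn : n ≠ 0) :
    (∑ j ∈ Finset.range n, a ^ ((j : ℝ) / n)) * (1 - a ^ ((n : ℝ)⁻¹)) = 1 - a := by
  have hterm : ∀ j : ℕ, a ^ ((j : ℝ) / n) = (a ^ ((n : ℝ)⁻¹)) ^ j := fun j => by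
    rw [← rpow_natCast, ← rpow_mul ha, div_eq_inv_mul]
  simp only [hterm]
  rw [geom_sum_mul_neg, rpow_inv_natCast_pow ha hn]

lemma one_div_rpow_inv_natCast {σ : ℝ} (hσ : 0 < σ) (n : ℕ) :
    (1 / σ) ^ ((n : ℝ)⁻¹) = exp (-(log σ / n)) := by
  rw [one_div, inv_rpow hσ.le, rpow_def_of_pos hσ, ← exp_neg, div_eq_mul_inv]

lemma sq_div_mul_sum_sub_gFun_eq {n : ℕ} (hn : n ≠ 0) {σ : ℝ} (hσ : 1 < σ) :
    σ ^ 2 / n * ∑ j ∈ Finset.range n, (1 / σ) ^ ((j : ℝ) / n) - gFun σ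
      = (σ ^ 2 - σ) / n * ((1 - exp (-(log σ / n)))⁻¹ - (log σ / n)⁻¹) := by
  have hσ0 : 0 < σ := by linarith
  have hn0 : (0 : ℝ) < n := by exact_mod_cast Nat.pos_of_ne_zero hn
  have hE := one_sub_exp_neg_pos (div_pos (log_pos hσ) hn0)
  have hsum := sum_rpow_div_mul_one_sub (one_div_pos.mpr hσ0).le hn
  rw [one_div_rpow_inv_natCast hσ0] at hsum
  rw [eq_div_of_mul_eq hE.ne' hsum, gFun, if_neg hσ.ne']
  field_simp

lemma sq_div_mul_sum_sub_gFun_mem_Icc {n : ℕ} (hn : n ≠ 0) {σ : ℝ} (hσ : 1 ≤ σ) :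
    σ ^ 2 / n * ∑ j ∈ Finset.range n, (1 / σ) ^ ((j : ℝ) / n) - gFun σ
      ∈ Set.Icc 0 ((σ ^ 2 - σ) / n) := by
  rcases hσ.eq_or_lt with rfl | hσ
  · simp [gFun, hn]
  have hx : 0 < log σ / n := div_pos (log_pos hσ) (by positivity)
  have hcoeff : 0 ≤ (σ ^ 2 - σ) / n := div_nonneg (by nlinarith) (Nat.cast_nonneg n)
  rw [sq_div_mul_sum_sub_gFun_eq hn hσ]
  constructor
  · exact mul_nonneg hcoeff (sub_nonneg.mpr (inv_le_inv_one_sub_exp_neg hx))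
  · exact mul_le_of_le_one_right hcoeff (by linarith [inv_one_sub_exp_neg_le hx])

lemma natCast_mul_fSymb (n : ℕ) (θ : ℝ) :
    n * fSymb n θ
      = (n * |θ|) ^ 2 / n * ∑ j ∈ Finset.range n, (1 / (n * |θ|)) ^ ((j : ℝ) / n) := by
  rw [fSymb, mul_pow, sq_abs]
  rcases eq_or_ne (n : ℝ) 0 with hn | hn
  · simp [hn]
  · field_simp

/-- Uniform expansion `n f_n(θ) = g(n|θ|) + r_n(θ)` with
`|r_n(θ)| ≤ C (n θ² + |θ|)`, for `1/n ≤ |θ| ≤ π`. -/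
theorem stmt_16 :
    ∃ C : ℝ, ∀ n : ℕ, 1 ≤ n → ∀ θ : ℝ, 1 / (n : ℝ) ≤ |θ| → |θ| ≤ π →
      |(n : ℝ) * fSymb n θ - gFun ((n : ℝ) * |θ|)| ≤ C * ((n : ℝ) * θ ^ 2 + |θ|) := by
  refine ⟨1, fun n hn θ hθ _ => ?_⟩
  have hn0 : (0 : ℝ) < n := by exact_mod_cast hn
  have hσ : 1 ≤ (n : ℝ) * |θ| := by rwa [div_le_iff₀' hn0] at hθ
  obtain ⟨hlow, hupp⟩ := sq_div_mul_sum_sub_gFun_mem_Icc (n := n) (by omega) hσ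
  rw [natCast_mul_fSymb, abs_of_nonneg hlow]
  calc _ ≤ ((n * |θ|) ^ 2 - n * |θ|) / n := hupp
    _ = n * θ ^ 2 - |θ| := by rw [mul_pow, sq_abs]; field_simp
    _ ≤ 1 * (n * θ ^ 2 + |θ|) := by linarith [abs_nonneg θ]
end
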